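/- Let U ⊆ ℝⁿ be open, X: U → ℝⁿ a vector field with complete flow Φ, R_X its chain recurrent set (an invariant set), and τ: U → ℝ continuous and strictly decreasing along orbits outside R_X (i.e. τ(Φ_t(p)) < τ(p) for all t > 0 and p ∈ U \ R_X). Let s_k < s_i be real numbers, let W_{s_k} ⊆ {τ = s_k} \ R_X and W_{s_i} ⊆ {τ = s_i} \ R_X, and let i < k be natural numbers. Then Φ([k, k+1] × closure(W_{s_k})) ∩ Φ((−(i+1), i+1) × W_{s_i}) = ∅; that is, if p ∈ closure(W_{s_k}) ⊆ {τ = s_k} \ R_X, t_p ∈ [k, k+1], q ∈ W_{s_i}, and t_q ∈ (−(i+1), i+1), then Φ_{t_p}(p) ≠ Φ_{t_q}(q). -/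

import Mathlib

open Set

noncomputable section

abbrev Euc (n : ℕ) := EuclideanSpace ℝ (Fin n)

/-- `p 0, …, p m` is an `(ε,T)`-chain for the flow `Φ` in `U`. -/
def IsEpsTChain {n : ℕ} (Φ : ℝ → Euc n → Euc n) (U : Set (Euc n))
    (ε : Euc n → ℝ) (T : ℝ) (m : ℕ) (p : ℕ → Euc n) : Prop :=
  1 ≤ m ∧ (∀ i ≤ m, p i ∈ U) ∧
    ∃ t : ℕ → ℝ, ∀ i < m, T ≤ t i ∧ ‖Φ (t i) (p i) - p (i + 1)‖ ≤ ε (Φ (t i) (p i))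

/-- The chain recurrent set of the flow `Φ` on `U`. -/
def chainRecurrentSet {n : ℕ} (Φ : ℝ → Euc n → Euc n) (U : Set (Euc n)) : Set (Euc n) :=
  {p | p ∈ U ∧ ∀ T > (0:ℝ), ∀ ε : Euc n → ℝ, ContinuousOn ε U → (∀ x ∈ U, 0 < ε x) →
    ∃ m q, IsEpsTChain Φ U ε T m q ∧ q 0 = p ∧ q m = p}

/-- Chain equivalence: `p ∼ q` iff there is `T > 0` such that for all continuous positive `ε`
there is an `(ε,T)`-chain from `p` to `p` containing `q`. -/
def ChainEquiv {n : ℕ} (Φ : ℝ → Euc n → Euc n) (U : Set (Euc n)) (p q : Euc n) : Prop :=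
  ∃ T > (0:ℝ), ∀ ε : Euc n → ℝ, ContinuousOn ε U → (∀ x ∈ U, 0 < ε x) →
    ∃ m r, IsEpsTChain Φ U ε T m r ∧ r 0 = p ∧ r m = p ∧ ∃ i ≤ m, r i = q

/-- `Φ` is the complete flow of the vector field `X` on `U`: orbits stay in `U`, start at the
initial point, solve `ẋ = X(x)` and are the unique such global solutions. -/
def IsCompleteFlow {n : ℕ} (X : Euc n → Euc n) (U : Set (Euc n))
    (Φ : ℝ → Euc n → Euc n) : Prop :=
  (∀ p ∈ U, ∀ t : ℝ, Φ t p ∈ U) ∧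
  (∀ p ∈ U, Φ 0 p = p) ∧
  (∀ p ∈ U, ∀ t : ℝ, HasDerivAt (fun s => Φ s p) (X (Φ t p)) t) ∧
  (∀ p ∈ U, ∀ γ : ℝ → Euc n, γ 0 = p → (∀ t, γ t ∈ U) →
    (∀ t, HasDerivAt γ (X (γ t)) t) → ∀ t, γ t = Φ t p)

/-- The orbital derivative `∇τ(p)·X(p)`. -/
def orbDeriv {n : ℕ} (X : Euc n → Euc n) (τ : Euc n → ℝ) (p : Euc n) : ℝ :=
  inner ℝ (gradient τ p) (X p)

/-- A `C^l` Lyapunov function for `X` on `U`. -/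
def IsLyapunov {n : ℕ} (X : Euc n → Euc n) (U : Set (Euc n)) (l : ℕ∞)
    (τ : Euc n → ℝ) : Prop :=
  ContDiffOn ℝ l τ U ∧ (∀ p ∈ U, orbDeriv X τ p ≤ 0) ∧
    ∀ p ∈ U, gradient τ p ≠ 0 → orbDeriv X τ p < 0

/-- A complete Lyapunov function: a Lyapunov function, strictly decreasing along orbits outside
the chain recurrent set, whose set of critical values is nowhere dense, and whose critical level
sets intersected with the chain recurrent set are chain transitive components. -/
def IsCompleteLyapunov {n : ℕ} (X : Euc n → Euc n) (U : Set (Euc n))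
    (Φ : ℝ → Euc n → Euc n) (l : ℕ∞) (τ : Euc n → ℝ) : Prop :=
  IsLyapunov X U l τ ∧
  (∀ p ∈ U \ chainRecurrentSet Φ U, ∀ t > (0:ℝ), τ (Φ t p) < τ p) ∧
  interior (closure (τ '' chainRecurrentSet Φ U)) = ∅ ∧
  ∀ c ∈ τ '' chainRecurrentSet Φ U, ∃ p ∈ chainRecurrentSet Φ U,
    τ ⁻¹' {c} ∩ chainRecurrentSet Φ U = {q ∈ chainRecurrentSet Φ U | ChainEquiv Φ U p q}

namespace IsCompleteFlow

variable {n : ℕ} {X : Euc n → Euc n} {U : Set (Euc n)} {Φ : ℝ → Euc n → Euc n}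

/-- Both sides solve `ẋ = X(x)` through `Φ t p` at time `s = 0`, so uniqueness identifies them. -/
theorem map_add (hΦ : IsCompleteFlow X U Φ) {p : Euc n} (hp : p ∈ U) (s t : ℝ) :
    Φ (s + t) p = Φ s (Φ t p) := by
  obtain ⟨hmem, -, hderiv, huniq⟩ := hΦ
  refine huniq (Φ t p) (hmem p hp t) (fun u => Φ (u + t) p) (by simp)
    (fun u => hmem p hp (u + t)) (fun u => ?_) s
  simpa [Function.comp_def] using (hderiv p hp (u + t)).scomp u ((hasDerivAt_id u).add_const t)

theorem map_sub_eq_of_map_eq (hΦ : IsCompleteFlow X U Φ) {p q : Euc n} (hp : p ∈ U)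
    (hq : q ∈ U) {s t : ℝ} (h : Φ s p = Φ t q) : Φ (s - t) p = q := by
  calc Φ (s - t) p = Φ (-t) (Φ s p) := by rw [sub_eq_neg_add, hΦ.map_add hp]
    _ = Φ (-t) (Φ t q) := by rw [h]
    _ = q := by rw [← hΦ.map_add hq, neg_add_cancel, hΦ.2.1 q hq]

end IsCompleteFlow

theorem flowBoxes_disjoint_general
    {n : ℕ} (U : Set (Euc n))
    (X : Euc n → Euc n) (Φ : ℝ → Euc n → Euc n) (hΦ : IsCompleteFlow X U Φ)
    (τ : Euc n → ℝ)
    (hdec : ∀ p ∈ U \ chainRecurrentSet Φ U, ∀ t > (0:ℝ), τ (Φ t p) < τ p)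
    (i k : ℕ) (hik : i < k) (sk si : ℝ) (hs : sk < si)
    (Wk Wi : Set (Euc n))
    (hWk : closure Wk ⊆ {p ∈ U | τ p = sk} \ chainRecurrentSet Φ U)
    (hWi : Wi ⊆ {p ∈ U | τ p = si} \ chainRecurrentSet Φ U) :
    ∀ p ∈ closure Wk, ∀ tp ∈ Icc (k:ℝ) ((k:ℝ)+1), ∀ q ∈ Wi,
      ∀ tq ∈ Ioo (-((i:ℝ)+1)) ((i:ℝ)+1), Φ tp p ≠ Φ tq q := by
  intro p hp tp htp q hq tq htq heq
  obtain ⟨⟨hpU, rfl⟩, hpR⟩ := hWk hp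
  obtain ⟨⟨hqU, rfl⟩, -⟩ := hWi hq
  have hik' : (i : ℝ) + 1 ≤ k := by exact_mod_cast hik
  have hdecrease := hdec p ⟨hpU, hpR⟩ (tp - tq) (by linarith [htp.1, htq.2])
  rw [hΦ.map_sub_eq_of_map_eq hpU hqU heq] at hdecrease
  linarith

/-- Flow boxes around level sets at different levels and with the stated time
parameters are disjoint: `Φ([k,k+1] × closure W_{s_k}) ∩ Φ((-(i+1),i+1) × W_{s_i}) = ∅`. -/
theorem flowBoxes_disjoint
    {n : ℕ} (U : Set (Euc n)) (hU : IsOpen U)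
    (X : Euc n → Euc n) (Φ : ℝ → Euc n → Euc n) (hΦ : IsCompleteFlow X U Φ)
    (τ : Euc n → ℝ) (hτc : ContinuousOn τ U)
    (hdec : ∀ p ∈ U \ chainRecurrentSet Φ U, ∀ t > (0:ℝ), τ (Φ t p) < τ p)
    (hinv : ∀ t : ℝ, Φ t '' chainRecurrentSet Φ U = chainRecurrentSet Φ U)
    (i k : ℕ) (hik : i < k) (sk si : ℝ) (hs : sk < si)
    (Wk Wi : Set (Euc n))
    (hWk : closure Wk ⊆ {p ∈ U | τ p = sk} \ chainRecurrentSet Φ U)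
    (hWi : Wi ⊆ {p ∈ U | τ p = si} \ chainRecurrentSet Φ U) :
    ∀ p ∈ closure Wk, ∀ tp ∈ Icc (k:ℝ) ((k:ℝ)+1), ∀ q ∈ Wi,
      ∀ tq ∈ Ioo (-((i:ℝ)+1)) ((i:ℝ)+1), Φ tp p ≠ Φ tq q :=
  flowBoxes_disjoint_general U X Φ hΦ τ hdec i k hik sk si hs Wk Wi hWk hWi
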